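/- arXiv:1307.7486 — 11 statements merged into one kernel-verified Lean document; each statement's English description precedes it below -/
import Mathlib

section
/- Let G be a finite simple graph with no isolated vertices whose connected components are G_1, G_2, ..., G_ω. Then max_{1≤i≤ω} χ_d^t(G_i) + 2ω − 2 ≤ χ_d^t(G) ≤ Σ_{i=1}^{ω} χ_d^t(G_i). -/
/-!
A total dominator coloring of `G` restricts to one of each component `G_c`, so the colors
used on `G_c` number at least `χ_d^t(G_c)`. Moreover every component `G_d` owns at least two
colors whose classes lie entirely inside `G_d`: a vertex `v` of `G_d` is adjacent to a whole
class `i`, a vertex `u` of that class is adjacent to a whole class `j`, both classes lie in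
`G_d`, and `i ≠ j` since `u` is not adjacent to itself. These private colors of the `ω - 1`
other components are not used on `G_c`, which gives the lower bound. For the upper bound,
optimal colorings of the components with pairwise disjoint palettes combine into a total
dominator coloring of `G`.
-/

open SimpleGraph

/-- `f` is a total dominator coloring of `G`: a proper coloring (with colors in `Fin n`)
such that every vertex is adjacent to every vertex of some nonempty color class. -/
def IsTDColoring {V : Type*} (G : SimpleGraph V) {n : ℕ} (f : V → Fin n) : Prop :=
  (∀ u v : V, G.Adj u v → f u ≠ f v) ∧
  ∀ v : V, ∃ i : Fin n, (∃ u, f u = i) ∧ ∀ u : V, f u = i → G.Adj v u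

/-- The total dominator chromatic number `χ_d^t(G)`: the minimum number of color classes
in a total dominator coloring of `G`. -/
noncomputable def tdChromNum {V : Type*} (G : SimpleGraph V) : ℕ :=
  sInf {n : ℕ | ∃ f : V → Fin n, IsTDColoring G f}

/-- `f` is a dominator coloring of `G`: a proper coloring such that every vertex dominates
some nonempty color class (the class is contained in its closed neighborhood). -/
def IsDColoring {V : Type*} (G : SimpleGraph V) {n : ℕ} (f : V → Fin n) : Prop :=
  (∀ u v : V, G.Adj u v → f u ≠ f v) ∧
  ∀ v : V, ∃ i : Fin n, (∃ u, f u = i) ∧ ∀ u : V, f u = i → u = v ∨ G.Adj v u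

/-- The dominator chromatic number `χ_d(G)`. -/
noncomputable def dChromNum {V : Type*} (G : SimpleGraph V) : ℕ :=
  sInf {n : ℕ | ∃ f : V → Fin n, IsDColoring G f}

/-- The total domination number `γ_t(G)`: the minimum size of a set `S` such that every
vertex of `G` has a neighbor in `S`. -/
noncomputable def totalDomNum {V : Type*} (G : SimpleGraph V) : ℕ :=
  sInf {n : ℕ | ∃ S : Finset V, S.card = n ∧ ∀ v : V, ∃ u ∈ S, G.Adj v u}

section

variable {V α : Type*} {G : SimpleGraph V}

def IsTotalDominatorColoring (G : SimpleGraph V) (f : V → α) : Prop :=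
  (∀ u v : V, G.Adj u v → f u ≠ f v) ∧
  ∀ v : V, ∃ i : α, (∃ u, f u = i) ∧ ∀ u : V, f u = i → G.Adj v u

theorem isTDColoring_iff_isTotalDominatorColoring {n : ℕ} {f : V → Fin n} :
    IsTDColoring G f ↔ IsTotalDominatorColoring G f :=
  Iff.rfl

theorem isTotalDominatorColoring_comp_iff {β : Type*} {g : α → β} (hg : g.Injective)
    {f : V → α} : IsTotalDominatorColoring G (g ∘ f) ↔ IsTotalDominatorColoring G f := by
  constructor
  · rintro ⟨hproper, hdom⟩
    refine ⟨fun u v huv hfuv => hproper u v huv (congrArg g hfuv), fun v => ?_⟩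
    obtain ⟨_, ⟨u, rfl⟩, hu⟩ := hdom v
    exact ⟨f u, ⟨u, rfl⟩, fun w hw => hu w (congrArg g hw)⟩
  · rintro ⟨hproper, hdom⟩
    refine ⟨fun u v huv hfuv => hproper u v huv (hg hfuv), fun v => ?_⟩
    obtain ⟨i, ⟨u, hu⟩, hi⟩ := hdom v
    exact ⟨g i, ⟨u, congrArg g hu⟩, fun w hw => hi w (hg hw)⟩

theorem isTotalDominatorColoring_of_injective {f : V → α} (hf : f.Injective)
    (hiso : ∀ v : V, ∃ u : V, G.Adj v u) : IsTotalDominatorColoring G f := by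
  refine ⟨fun u v huv hfuv => huv.ne (hf hfuv), fun v => ?_⟩
  obtain ⟨u, hu⟩ := hiso v
  exact ⟨f u, ⟨u, rfl⟩, fun w hw => hf hw ▸ hu⟩

theorem tdChromNum_le_card_range {f : V → α} [Finite (Set.range f)]
    (hf : IsTotalDominatorColoring G f) : tdChromNum G ≤ Nat.card (Set.range f) := by
  let e := Finite.equivFin (Set.range f)
  refine Nat.sInf_le ⟨e ∘ Set.rangeFactorization f, ?_⟩
  rw [isTDColoring_iff_isTotalDominatorColoring, isTotalDominatorColoring_comp_iff e.injective,
    ← isTotalDominatorColoring_comp_iff Subtype.val_injective]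
  exact hf

theorem tdChromNum_le_card [Finite α] {f : V → α} (hf : IsTotalDominatorColoring G f) :
    tdChromNum G ≤ Nat.card α :=
  (tdChromNum_le_card_range hf).trans (Finite.card_subtype_le _)

theorem exists_isTotalDominatorColoring_fin_tdChromNum [Finite V]
    (hiso : ∀ v : V, ∃ u : V, G.Adj v u) :
    ∃ f : V → Fin (tdChromNum G), IsTotalDominatorColoring G f := by
  have hne : {n | ∃ f : V → Fin n, IsTDColoring G f}.Nonempty :=
    ⟨Nat.card V, Finite.equivFin V,
      isTotalDominatorColoring_of_injective (Finite.equivFin V).injective hiso⟩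
  exact Nat.sInf_mem hne

theorem exists_adj_induce_supp (hiso : ∀ v : V, ∃ u : V, G.Adj v u)
    (c : G.ConnectedComponent) (v : c.supp) : ∃ u : c.supp, (G.induce c.supp).Adj v u := by
  obtain ⟨u, hu⟩ := hiso v
  exact ⟨⟨u, c.mem_supp_of_adj_mem_supp v.2 hu⟩, hu⟩

theorem IsTotalDominatorColoring.induce_supp {f : V → α} (hf : IsTotalDominatorColoring G f)
    (c : G.ConnectedComponent) :
    IsTotalDominatorColoring (G.induce c.supp) (f ∘ Subtype.val) := by
  refine ⟨fun u v huv => hf.1 u v huv, fun v => ?_⟩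
  obtain ⟨i, ⟨u, hu⟩, hi⟩ := hf.2 v
  exact ⟨i, ⟨⟨u, c.mem_supp_of_adj_mem_supp v.2 (hi u hu)⟩, hu⟩, fun w hw => hi w hw⟩

def componentwiseColoring {β : G.ConnectedComponent → Type*} (F : ∀ c, c.supp → β c) (v : V) :
    Σ c, β c :=
  ⟨G.connectedComponentMk v, F _ ⟨v, rfl⟩⟩

theorem componentwiseColoring_of_mem_supp {β : G.ConnectedComponent → Type*}
    (F : ∀ c, c.supp → β c) {c : G.ConnectedComponent} {v : V} (hv : v ∈ c.supp) :
    componentwiseColoring F v = ⟨c, F c ⟨v, hv⟩⟩ := by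
  rw [ConnectedComponent.mem_supp_iff] at hv
  subst hv
  rfl

theorem IsTotalDominatorColoring.componentwise {β : G.ConnectedComponent → Type*}
    {F : ∀ c, c.supp → β c} (hF : ∀ c, IsTotalDominatorColoring (G.induce c.supp) (F c)) :
    IsTotalDominatorColoring G (componentwiseColoring F) := by
  refine ⟨fun u v huv hfuv => ?_, fun v => ?_⟩
  · have hu : u ∈ (G.connectedComponentMk v).supp :=
      ConnectedComponent.mem_supp_of_adj_mem_supp _ rfl huv.symm
    rw [componentwiseColoring_of_mem_supp F hu, componentwiseColoring_of_mem_supp F rfl] at hfuv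
    exact (hF _).1 ⟨u, hu⟩ ⟨v, rfl⟩ huv (sigma_mk_injective hfuv)
  · let c := G.connectedComponentMk v
    obtain ⟨i, ⟨u, hu⟩, hi⟩ := (hF c).2 ⟨v, rfl⟩
    refine ⟨⟨c, i⟩, ⟨u, by rw [componentwiseColoring_of_mem_supp F u.2, hu]⟩, fun w hw => ?_⟩
    have hwc : w ∈ c.supp := congrArg Sigma.fst hw
    rw [componentwiseColoring_of_mem_supp F hwc] at hw
    exact hi ⟨w, hwc⟩ (sigma_mk_injective hw)

theorem tdChromNum_le_sum_tdChromNum_induce [Finite V] [Fintype G.ConnectedComponent]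
    (hiso : ∀ v : V, ∃ u : V, G.Adj v u) :
    tdChromNum G ≤ ∑ c : G.ConnectedComponent, tdChromNum (G.induce c.supp) := by
  choose F hF using fun c : G.ConnectedComponent =>
    exists_isTotalDominatorColoring_fin_tdChromNum (exists_adj_induce_supp hiso c)
  calc tdChromNum G ≤ Nat.card (Σ c : G.ConnectedComponent, Fin (tdChromNum (G.induce c.supp))) :=
        tdChromNum_le_card (IsTotalDominatorColoring.componentwise hF)
    _ = ∑ c : G.ConnectedComponent, tdChromNum (G.induce c.supp) := by simp

open Classical in
noncomputable def privateColors [Fintype α] (f : V → α) (c : G.ConnectedComponent) : Finset α :=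
  Finset.univ.filter fun i => (∃ u, f u = i) ∧ ∀ u, f u = i → u ∈ c.supp

variable [Fintype α] {f : V → α}

theorem mem_privateColors {c : G.ConnectedComponent} {i : α} :
    i ∈ privateColors f c ↔ (∃ u, f u = i) ∧ ∀ u, f u = i → u ∈ c.supp := by
  simp [privateColors]

theorem disjoint_privateColors {c d : G.ConnectedComponent} (hcd : c ≠ d) :
    Disjoint (privateColors f c) (privateColors f d) := by
  refine Finset.disjoint_left.mpr fun i hc hd => ?_
  obtain ⟨⟨u, hu⟩, hci⟩ := mem_privateColors.mp hc
  exact hcd ((hci u hu).symm.trans ((mem_privateColors.mp hd).2 u hu))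

theorem IsTotalDominatorColoring.one_lt_card_privateColors (hf : IsTotalDominatorColoring G f)
    (c : G.ConnectedComponent) : 1 < (privateColors f c).card := by
  obtain ⟨v, rfl⟩ := c.exists_rep
  obtain ⟨i, ⟨u, hu⟩, hi⟩ := hf.2 v
  obtain ⟨j, ⟨w, hw⟩, hj⟩ := hf.2 u
  have hi_supp : ∀ x, f x = i → x ∈ (G.connectedComponentMk v).supp :=
    fun x hx => ConnectedComponent.mem_supp_of_adj_mem_supp _ rfl (hi x hx)
  have hj_supp : ∀ x, f x = j → x ∈ (G.connectedComponentMk v).supp :=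
    fun x hx => ConnectedComponent.mem_supp_of_adj_mem_supp _ (hi_supp u hu) (hj x hx)
  refine Finset.one_lt_card.mpr ⟨i, mem_privateColors.mpr ⟨⟨u, hu⟩, hi_supp⟩,
    j, mem_privateColors.mpr ⟨⟨w, hw⟩, hj_supp⟩, ?_⟩
  rintro rfl
  exact G.irrefl (hj u hu)

theorem disjoint_range_privateColors {c d : G.ConnectedComponent}
    [Fintype (Set.range (f ∘ Subtype.val : c.supp → α))] (hdc : d ≠ c) :
    Disjoint (Set.range (f ∘ Subtype.val : c.supp → α)).toFinset (privateColors f d) := by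
  refine Finset.disjoint_left.mpr fun i hc hd => ?_
  obtain ⟨⟨u, hu⟩, rfl⟩ := Set.mem_toFinset.mp hc
  exact hdc (((mem_privateColors.mp hd).2 u rfl).symm.trans hu)

theorem IsTotalDominatorColoring.card_range_induce_add_le [Fintype G.ConnectedComponent]
    (hf : IsTotalDominatorColoring G f) (c : G.ConnectedComponent) :
    Nat.card (Set.range (f ∘ Subtype.val : c.supp → α)) +
      2 * (Fintype.card G.ConnectedComponent - 1) ≤ Fintype.card α := by
  classical
  set U := (Set.range (f ∘ Subtype.val : c.supp → α)).toFinset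
  set T := Finset.univ.erase c
  have hT : T.card = Fintype.card G.ConnectedComponent - 1 := by
    rw [Finset.card_erase_of_mem (Finset.mem_univ c), Finset.card_univ]
  calc Nat.card (Set.range (f ∘ Subtype.val : c.supp → α)) +
        2 * (Fintype.card G.ConnectedComponent - 1)
      = U.card + T.card • 2 := by rw [Nat.card_eq_card_toFinset, hT, smul_eq_mul, mul_comm]
    _ ≤ U.card + ∑ d ∈ T, (privateColors f d).card := by
        gcongr
        exact Finset.card_nsmul_le_sum _ _ _ fun d _ => hf.one_lt_card_privateColors d
    _ = (U ∪ T.biUnion (privateColors f)).card := by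
        rw [Finset.card_union_of_disjoint, Finset.card_biUnion]
        · exact fun d _ d' _ h => disjoint_privateColors h
        · exact (Finset.disjoint_biUnion_right _ _ _).mpr
            fun d hd => disjoint_range_privateColors (Finset.ne_of_mem_erase hd)
    _ ≤ Fintype.card α := Finset.card_le_univ _

end

theorem tdChromNum_induce_add_le [Finite V] [Fintype G.ConnectedComponent]
    (hiso : ∀ v : V, ∃ u : V, G.Adj v u) (c : G.ConnectedComponent) :
    tdChromNum (G.induce c.supp) + 2 * (Fintype.card G.ConnectedComponent - 1) ≤ tdChromNum G := by
  obtain ⟨f, hf⟩ := exists_isTotalDominatorColoring_fin_tdChromNum hiso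
  calc tdChromNum (G.induce c.supp) + 2 * (Fintype.card G.ConnectedComponent - 1)
      ≤ Nat.card (Set.range (f ∘ Subtype.val : c.supp → _)) +
          2 * (Fintype.card G.ConnectedComponent - 1) := by
        gcongr
        exact tdChromNum_le_card_range (hf.induce_supp c)
    _ ≤ Fintype.card (Fin (tdChromNum G)) := hf.card_range_induce_add_le c
    _ = tdChromNum G := Fintype.card_fin _

/-- For a finite graph `G` with no isolated vertices whose connected components are
`G_1, …, G_ω`: `max_i χ_d^t(G_i) + 2ω − 2 ≤ χ_d^t(G) ≤ Σ_i χ_d^t(G_i)`. -/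
theorem stmt2 {V : Type*} [Fintype V] (G : SimpleGraph V)
    [Fintype G.ConnectedComponent]
    (hiso : ∀ v : V, ∃ u : V, G.Adj v u) :
    (Finset.univ.sup fun c : G.ConnectedComponent => tdChromNum (G.induce c.supp)) +
        2 * Fintype.card G.ConnectedComponent - 2 ≤ tdChromNum G ∧
    tdChromNum G ≤ ∑ c : G.ConnectedComponent, tdChromNum (G.induce c.supp) := by
  refine ⟨?_, tdChromNum_le_sum_tdChromNum_induce hiso⟩
  rcases isEmpty_or_nonempty G.ConnectedComponent with hempty | hnonempty
  · simp
  · obtain ⟨c, -, hc⟩ := Finset.exists_mem_eq_sup Finset.univ Finset.univ_nonempty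
      fun c : G.ConnectedComponent => tdChromNum (G.induce c.supp)
    have := tdChromNum_induce_add_le hiso c
    omega
end

section
/- Let G be a finite simple connected graph of order n ≥ 2 (so G has no isolated vertices). Then 2 ≤ χ_d^t(G) ≤ n. Furthermore, χ_d^t(G) = 2 if and only if G is a complete bipartite graph, and χ_d^t(G) = n if and only if G is isomorphic to the complete graph K_n. -/
open SimpleGraph

/-!
Two colours are always needed, since the class dominated by a vertex `v` cannot contain `v`.
With exactly two colours every vertex is adjacent to the whole other class, which is precisely a
complete bipartition; conversely the two sides of a complete bipartition form a total dominator
colouring. Giving every vertex its own colour works because there are no isolated vertices, and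
for `K_n` every proper colouring is injective. If `G ≠ K_n`, two nonadjacent vertices `u, v`,
neither of which is the only neighbour of some vertex, may share a colour, which leaves `n - 1`
colours. Such a pair comes from an induced path `a - c - b`, replacing `a` (resp. `b`) by a
pendant neighbour if it has one.
-/

section

variable {V : Type*} {G : SimpleGraph V}

namespace SimpleGraph

def IsCompleteBipartition (G : SimpleGraph V) (A B : Set V) : Prop :=
  A.Nonempty ∧ B.Nonempty ∧ A ∪ B = Set.univ ∧ A ∩ B = ∅ ∧
    ∀ u v : V, G.Adj u v ↔ ((u ∈ A ∧ v ∈ B) ∨ (u ∈ B ∧ v ∈ A))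

def IsSupportVertex (G : SimpleGraph V) (u : V) : Prop :=
  ∃ w, G.neighborSet w = {u}

lemma adj_iff_of_neighborSet_eq_singleton {w u : V} (h : G.neighborSet w = {u}) (y : V) :
    G.Adj w y ↔ y = u :=
  Set.ext_iff.mp h y

lemma exists_adj_ne_ne_or_adj_adj (hG : ∀ v, ∃ u, G.Adj v u) {u v : V}
    (hu : ¬ G.IsSupportVertex u) (hv : ¬ G.IsSupportVertex v) (w : V) :
    (∃ y, G.Adj w y ∧ y ≠ u ∧ y ≠ v) ∨ (G.Adj w u ∧ G.Adj w v) := by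
  by_contra! ⟨hsub, hboth⟩
  by_cases hwu : G.Adj w u
  · refine hu ⟨w, Set.ext fun z => ⟨fun hz => ?_, fun hz => hz ▸ hwu⟩⟩
    by_contra hzu
    exact hboth hwu (hsub z hz hzu ▸ hz)
  · obtain ⟨y, hy⟩ := hG w
    have hyv : y = v := hsub y hy fun hyu => hwu (hyu ▸ hy)
    exact hv ⟨w, Set.ext fun z => ⟨fun hz => hsub z hz fun hzu => hwu (hzu ▸ hz),
      fun hz => hz ▸ hyv ▸ hy⟩⟩

/-- A pendant neighbour `w` of `a` is not a support vertex: its only neighbour `a` has the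
second neighbour `c`. -/
lemma exists_not_isSupportVertex {a b c : V} (hac : G.Adj a c) (hcb : G.Adj c b) (hab : a ≠ b) :
    ∃ a', (a' = a ∨ ∀ y, G.Adj a' y ↔ y = a) ∧ ¬ G.IsSupportVertex a' := by
  by_cases ha : G.IsSupportVertex a
  · obtain ⟨w, hw⟩ := ha
    have hw' := adj_iff_of_neighborSet_eq_singleton hw
    refine ⟨w, Or.inr hw', fun ⟨z, hz⟩ => ?_⟩
    have hz' := adj_iff_of_neighborSet_eq_singleton hz
    have hza : z = a := (hw' z).mp ((hz' w).mpr rfl).symm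
    have hcw : c = w := (hz' c).mp (hza ▸ hac)
    exact hab ((hw' b).mp (hcw ▸ hcb)).symm
  · exact ⟨a, Or.inl rfl, ha⟩

lemma exists_nonadj_not_isSupportVertex (hconn : G.Connected) (hne : G ≠ ⊤) :
    ∃ u v, u ≠ v ∧ ¬ G.Adj u v ∧ ¬ G.IsSupportVertex u ∧ ¬ G.IsSupportVertex v := by
  obtain ⟨x, y, hxy, hnadj⟩ := ne_top_iff_exists_not_adj.mp hne
  obtain ⟨p, hp⟩ := hconn.exists_walk_length_eq_dist x y
  obtain ⟨a, c, b, hac, hcb, hnab, hab⟩ :=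
    p.exists_adj_adj_not_adj_ne hp (hconn.one_lt_dist_of_ne_of_not_adj hxy hnadj)
  obtain ⟨a', ha', ha's⟩ := exists_not_isSupportVertex hac hcb hab
  obtain ⟨b', hb', hb's⟩ := exists_not_isSupportVertex hcb.symm hac.symm hab.symm
  rcases ha' with rfl | ha' <;> rcases hb' with rfl | hb'
  · exact ⟨_, _, hab, hnab, ha's, hb's⟩
  · exact ⟨_, b', by grind [G.adj_symm, G.irrefl], by grind [G.adj_symm], ha's, hb's⟩
  · exact ⟨a', _, by grind [G.adj_symm, G.irrefl], by grind [G.adj_symm], ha's, hb's⟩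
  · exact ⟨a', b', fun h => hab ((hb' a).mp (h ▸ (ha' a).mpr rfl)),
      by grind [G.adj_symm, G.irrefl], ha's, hb's⟩

end SimpleGraph

namespace IsTDColoring

variable {n : ℕ} {f : V → Fin n}

lemma exists_color_ne (hf : IsTDColoring G f) (v : V) :
    ∃ i, i ≠ f v ∧ (∃ u, f u = i) ∧ ∀ u, f u = i → G.Adj v u := by
  obtain ⟨i, hi, hadj⟩ := hf.2 v
  exact ⟨i, fun h => G.irrefl (hadj v h.symm), hi, hadj⟩

lemma two_le [Nonempty V] (hf : IsTDColoring G f) : 2 ≤ n := by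
  obtain ⟨i, hi, -⟩ := hf.exists_color_ne (Classical.arbitrary V)
  have := Fin.val_ne_of_ne hi
  omega

lemma adj_iff_ne {f : V → Fin 2} (hf : IsTDColoring G f) (u w : V) :
    G.Adj u w ↔ f u ≠ f w := by
  refine ⟨hf.1 u w, fun hne => ?_⟩
  obtain ⟨i, hi, -, hadj⟩ := hf.exists_color_ne u
  exact hadj w (by omega)

lemma card_le_of_top [Fintype V] (hf : IsTDColoring ⊤ f) : Fintype.card V ≤ n := by
  simpa using Fintype.card_le_of_injective f fun u w h => by_contra fun hne => hf.1 u w hne h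

lemma isCompleteBipartition {f : V → Fin 2} (hf : IsTDColoring G f) (v : V) :
    G.IsCompleteBipartition {u | f u = f v} {u | f u ≠ f v} := by
  obtain ⟨i, hi, ⟨w, rfl⟩, -⟩ := hf.exists_color_ne v
  refine ⟨⟨v, rfl⟩, ⟨w, hi⟩, Set.union_compl_self _, Set.inter_compl_self _, fun u u' => ?_⟩
  simp only [hf.adj_iff_ne, Set.mem_ofPred_eq]
  omega

end IsTDColoring

lemma exists_isTDColoring_of_map {α : Type*} [Fintype α] (c : V → α)
    (hc : ∀ u v, G.Adj u v → c u ≠ c v) (hdom : ∀ v, ∃ z, ∀ u, c u = c z → G.Adj v u) :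
    ∃ f : V → Fin (Fintype.card α), IsTDColoring G f := by
  refine ⟨Fintype.equivFin α ∘ c, fun u v huv h => hc u v huv ((Fintype.equivFin α).injective h),
    fun v => ?_⟩
  obtain ⟨z, hz⟩ := hdom v
  exact ⟨_, ⟨z, rfl⟩, fun u hu => hz u ((Fintype.equivFin α).injective hu)⟩

lemma tdChromNum_le_of_map {α : Type*} [Fintype α] (c : V → α)
    (hc : ∀ u v, G.Adj u v → c u ≠ c v) (hdom : ∀ v, ∃ z, ∀ u, c u = c z → G.Adj v u) :
    tdChromNum G ≤ Fintype.card α :=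
  Nat.sInf_le (exists_isTDColoring_of_map c hc hdom)

lemma exists_isTDColoring_card [Fintype V] (hG : ∀ v, ∃ u, G.Adj v u) :
    ∃ f : V → Fin (Fintype.card V), IsTDColoring G f :=
  exists_isTDColoring_of_map id (fun _ _ h => h.ne) fun v =>
    (hG v).imp fun _ hu w (hw : w = _) => hw ▸ hu

lemma tdChromNum_le_card_s3 [Fintype V] (hG : ∀ v, ∃ u, G.Adj v u) :
    tdChromNum G ≤ Fintype.card V :=
  Nat.sInf_le (exists_isTDColoring_card hG)

lemma exists_isTDColoring_tdChromNum [Fintype V] (hG : ∀ v, ∃ u, G.Adj v u) :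
    ∃ f : V → Fin (tdChromNum G), IsTDColoring G f :=
  Nat.sInf_mem (s := {n | ∃ f : V → Fin n, IsTDColoring G f}) ⟨_, exists_isTDColoring_card hG⟩

lemma tdChromNum_le_two_of_isCompleteBipartition {A B : Set V}
    (h : G.IsCompleteBipartition A B) : tdChromNum G ≤ 2 := by
  obtain ⟨⟨a, ha⟩, ⟨b, hb⟩, hAB, hAB', hadj⟩ := h
  obtain rfl : Aᶜ = B := IsCompl.compl_eq
    ⟨Set.disjoint_iff_inter_eq_empty.mpr hAB', codisjoint_iff.mpr hAB⟩
  simp only [Set.mem_compl_iff] at hb hadj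
  refine Fintype.card_prop ▸ tdChromNum_le_of_map (· ∈ A) (fun u v huv h => by grind) fun v => ?_
  by_cases hv : v ∈ A
  · exact ⟨b, fun u hu => by grind⟩
  · exact ⟨a, fun u hu => by grind⟩

lemma tdChromNum_le_card_sub_one [Fintype V] (hG : ∀ v, ∃ u, G.Adj v u) {u v : V}
    (huv : u ≠ v) (hnadj : ¬ G.Adj u v) (hu : ¬ G.IsSupportVertex u)
    (hv : ¬ G.IsSupportVertex v) : tdChromNum G ≤ Fintype.card V - 1 := by
  classical
  let c : V → {x // x ≠ v} := fun x => if h : x = v then ⟨u, huv⟩ else ⟨x, h⟩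
  have hc : ∀ x y, c x = c y ↔ x = y ∨ (x = u ∧ y = v) ∨ (x = v ∧ y = u) := by
    intro x y
    simp only [c]
    split_ifs <;> simp only [Subtype.ext_iff] <;> grind
  have hcard : Fintype.card {x // x ≠ v} = Fintype.card V - 1 := by simp
  rw [← hcard]
  refine tdChromNum_le_of_map c (fun x y hxy h => ?_) fun w => ?_
  · rcases (hc x y).mp h with rfl | ⟨rfl, rfl⟩ | ⟨rfl, rfl⟩
    · exact G.irrefl hxy
    · exact hnadj hxy
    · exact hnadj hxy.symm
  · rcases exists_adj_ne_ne_or_adj_adj hG hu hv w with ⟨y, hy, hyu, hyv⟩ | ⟨hwu, hwv⟩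
    · exact ⟨y, fun x hx => by grind⟩
    · exact ⟨u, fun x hx => by grind⟩

lemma tdChromNum_lt_card_of_ne_top [Fintype V] (hconn : G.Connected) (hG : ∀ v, ∃ u, G.Adj v u)
    (hne : G ≠ ⊤) : tdChromNum G < Fintype.card V := by
  obtain ⟨u, v, huv, hnadj, hu, hv⟩ := exists_nonadj_not_isSupportVertex hconn hne
  have := tdChromNum_le_card_sub_one hG huv hnadj hu hv
  have := Fintype.card_pos_iff.mpr ⟨u⟩
  omega

end

/-- For a connected graph `G` of order `n ≥ 2`: `2 ≤ χ_d^t(G) ≤ n`; moreover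
`χ_d^t(G) = 2` iff `G` is complete bipartite, and `χ_d^t(G) = n` iff `G ≅ K_n`. -/
theorem stmt3 {V : Type*} [Fintype V] (G : SimpleGraph V)
    (hconn : G.Connected) (hn : 2 ≤ Fintype.card V) :
    2 ≤ tdChromNum G ∧ tdChromNum G ≤ Fintype.card V ∧
    (tdChromNum G = 2 ↔
      ∃ A B : Set V, A.Nonempty ∧ B.Nonempty ∧ A ∪ B = Set.univ ∧ A ∩ B = ∅ ∧
        ∀ u v : V, G.Adj u v ↔ ((u ∈ A ∧ v ∈ B) ∨ (u ∈ B ∧ v ∈ A))) ∧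
    (tdChromNum G = Fintype.card V ↔ G = ⊤) := by
  have : Nontrivial V := Fintype.one_lt_card_iff_nontrivial.mp hn
  have hG : ∀ v, ∃ u, G.Adj v u := hconn.preconnected.exists_adj_of_nontrivial
  have h2 : 2 ≤ tdChromNum G := (exists_isTDColoring_tdChromNum hG).choose_spec.two_le
  refine ⟨h2, tdChromNum_le_card_s3 hG, ⟨fun h => ?_, fun ⟨A, B, hAB⟩ =>
    le_antisymm (tdChromNum_le_two_of_isCompleteBipartition hAB) h2⟩,
    ⟨fun h => by_contra fun hne => (tdChromNum_lt_card_of_ne_top hconn hG hne).ne h, ?_⟩⟩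
  · obtain ⟨f, hf⟩ := h ▸ exists_isTDColoring_tdChromNum hG
    exact ⟨_, _, hf.isCompleteBipartition (Classical.arbitrary V)⟩
  · rintro rfl
    obtain ⟨f, hf⟩ := exists_isTDColoring_tdChromNum hG
    exact le_antisymm (tdChromNum_le_card_s3 hG) hf.card_le_of_top
end

section
/- Let G be a finite simple connected graph of order n ≥ 2, and let S be a nonempty independent set of vertices of G such that every vertex of V(G)∖S that is isolated in the induced subgraph G[V(G)∖S] is adjacent in G to all vertices of S. Then χ_d^t(G) ≤ n + 1 − |S|. -/
open SimpleGraph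

/-!
Give the independent set `S` a single color and every other vertex a color of its own. This is
proper because `S` is independent. A vertex with a neighbor `u ∉ S` dominates the singleton class
`{u}`. A vertex without such a neighbor cannot lie in `S` (it has some neighbor, and `S` is
independent), so it is isolated in `G[V∖S]` and hence dominates the class `S`. The coloring uses
`(n - |S|) + 1` colors.
-/

open Finset

section

variable {V : Type*} (G : SimpleGraph V)

theorem tdChromNum_le_of_isTDColoring {n : ℕ} {f : V → Fin n} (hf : IsTDColoring G f) :
    tdChromNum G ≤ n :=
  Nat.sInf_le ⟨f, hf⟩

theorem exists_coloring_with_class_and_singletons [Fintype V] [DecidableEq V] (S : Finset V) :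
    ∃ f : V → Fin (Fintype.card V + 1 - #S), ∀ u w, f u = f w ↔ u = w ∨ u ∈ S ∧ w ∈ S := by
  let g : V → Option {v // v ∉ S} := fun v => if h : v ∈ S then none else some ⟨v, h⟩
  have hcard : Fintype.card (Option {v // v ∉ S}) = Fintype.card V + 1 - #S := by
    rw [Fintype.card_option, Fintype.card_subtype_compl, Fintype.card_coe]
    have := S.card_le_univ
    omega
  refine ⟨Fintype.equivFinOfCardEq hcard ∘ g, fun u w => ?_⟩
  rw [Function.comp_apply, Function.comp_apply, (Fintype.equivFinOfCardEq hcard).apply_eq_iff_eq]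
  grind

theorem isTDColoring_of_class_and_singletons {n : ℕ} {f : V → Fin n} {S : Finset V}
    (hf : ∀ u w, f u = f w ↔ u = w ∨ u ∈ S ∧ w ∈ S) (hne : S.Nonempty) (hS : G.IsIndepSet S)
    (hdom : ∀ v, (∃ u ∉ S, G.Adj v u) ∨ ∀ u ∈ S, G.Adj v u) :
    IsTDColoring G f := by
  refine ⟨fun u w hadj hfuw => ?_, fun v => ?_⟩
  · rcases (hf u w).mp hfuw with rfl | ⟨hu, hw⟩
    · exact G.irrefl hadj
    · exact hS hu hw (G.ne_of_adj hadj) hadj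
  · rcases hdom v with ⟨u, hu, hvu⟩ | hall
    · refine ⟨f u, ⟨u, rfl⟩, fun w hw => ?_⟩
      rcases (hf u w).mp hw.symm with rfl | ⟨hu', -⟩
      · exact hvu
      · exact absurd hu' hu
    · obtain ⟨s, hs⟩ := hne
      refine ⟨f s, ⟨s, rfl⟩, fun w hw => hall w ?_⟩
      rcases (hf s w).mp hw.symm with rfl | ⟨-, hw'⟩
      exacts [hs, hw']

theorem adj_notMem_or_adj_all_of_isIndepSet {S : Finset V} (hnbr : ∀ v, ∃ u, G.Adj v u)
    (hS : G.IsIndepSet S)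
    (hiso : ∀ v : V, v ∉ S → (∀ u : V, u ∉ S → ¬ G.Adj v u) → ∀ u ∈ S, G.Adj v u) (v : V) :
    (∃ u ∉ S, G.Adj v u) ∨ ∀ u ∈ S, G.Adj v u := by
  by_cases hout : ∃ u ∉ S, G.Adj v u
  · exact .inl hout
  push Not at hout
  refine .inr (hiso v (fun hv => ?_) fun u hu hvu => hout u hu hvu)
  obtain ⟨u, hvu⟩ := hnbr v
  have hu : u ∈ S := by_contra fun hu => hout u hu hvu
  exact hS hv hu (G.ne_of_adj hvu) hvu

theorem tdChromNum_le_card_add_one_sub_card_of_isIndepSet [Fintype V]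
    (hnbr : ∀ v, ∃ u, G.Adj v u) {S : Finset V} (hne : S.Nonempty) (hS : G.IsIndepSet S)
    (hiso : ∀ v : V, v ∉ S → (∀ u : V, u ∉ S → ¬ G.Adj v u) → ∀ u ∈ S, G.Adj v u) :
    tdChromNum G ≤ Fintype.card V + 1 - #S := by
  classical
  obtain ⟨f, hf⟩ := exists_coloring_with_class_and_singletons S
  exact tdChromNum_le_of_isTDColoring G <| isTDColoring_of_class_and_singletons G hf hne hS
    (adj_notMem_or_adj_all_of_isIndepSet G hnbr hS hiso)

end

/-- If `S` is a nonempty independent set of a connected graph `G` of order `n ≥ 2` such that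
every vertex isolated in `G[V∖S]` is adjacent to all vertices of `S`, then
`χ_d^t(G) ≤ n + 1 − |S|`. -/
theorem stmt4 {V : Type*} [Fintype V] (G : SimpleGraph V)
    (hconn : G.Connected) (hn : 2 ≤ Fintype.card V)
    (S : Finset V) (hS : S.Nonempty)
    (hindep : ∀ u ∈ S, ∀ v ∈ S, ¬ G.Adj u v)
    (hiso : ∀ v : V, v ∉ S → (∀ u : V, u ∉ S → ¬ G.Adj v u) → ∀ u ∈ S, G.Adj v u) :
    tdChromNum G ≤ Fintype.card V + 1 - S.card := by
  have : Nontrivial V := Fintype.one_lt_card_iff_nontrivial.mp hn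
  exact tdChromNum_le_card_add_one_sub_card_of_isIndepSet G
    hconn.preconnected.exists_adj_of_nontrivial hS (fun u hu v hv _ => hindep u hu v hv) hiso
end

section
/- Let G be a finite simple connected k-regular graph of order n ≥ 2 whose independence number α(G) equals k. Then χ_d^t(G) ≤ n + 1 − α(G). -/
/-
Color a maximum independent set `S` (of size `α(G) = k`) with a single color and every other
vertex with a color of its own; this uses `n - α(G) + 1` colors and is proper. A vertex with a
neighbor outside `S` dominates that neighbor's singleton class. A vertex with no such neighbor
has all its `k` neighbors in `S`, and `|S| = k` forces its neighborhood to be all of `S`.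
-/

open SimpleGraph

/-- The independence number of a graph: the maximum size of a set of pairwise
non-adjacent vertices. -/
noncomputable def indepNum {V : Type*} (G : SimpleGraph V) : ℕ :=
  sSup {n : ℕ | ∃ s : Finset V, s.card = n ∧ ∀ u ∈ s, ∀ v ∈ s, ¬ G.Adj u v}

open Finset

section IndepNum

variable {V : Type*} [Fintype V] (G : SimpleGraph V)

lemma bddAbove_indepFinset_cards :
    BddAbove {n : ℕ | ∃ s : Finset V, s.card = n ∧ ∀ u ∈ s, ∀ v ∈ s, ¬ G.Adj u v} :=
  ⟨Fintype.card V, fun _ ⟨s, hs, _⟩ => hs ▸ s.card_le_univ⟩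

lemma exists_indepFinset_card_eq_indepNum :
    ∃ s : Finset V, s.card = _root_.indepNum G ∧ ∀ u ∈ s, ∀ v ∈ s, ¬ G.Adj u v :=
  Nat.sSup_mem (by exact ⟨0, ∅, by simp⟩) (bddAbove_indepFinset_cards G)

lemma indepNum_pos (v : V) : 0 < _root_.indepNum G :=
  Nat.lt_of_lt_of_le Nat.zero_lt_one <|
    le_csSup (bddAbove_indepFinset_cards G) ⟨{v}, by simp⟩

end IndepNum

section Collapse

variable {V : Type*} [Fintype V] [DecidableEq V]

noncomputable def collapseColoring (s : Finset V) : V → Fin (sᶜ.card + 1) := fun v =>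
  if h : v ∈ s then Fin.last _ else (sᶜ.equivFin ⟨v, mem_compl.2 h⟩).castSucc

lemma collapseColoring_eq_iff {s : Finset V} {u w : V} :
    collapseColoring s u = collapseColoring s w ↔ u = w ∨ (u ∈ s ∧ w ∈ s) := by
  unfold collapseColoring
  split_ifs with hu hw hw
  · simp [hu, hw]
  · simp [(Fin.castSucc_lt_last _).ne', hu, hw, ne_of_mem_of_not_mem hu hw]
  · simp [(Fin.castSucc_lt_last _).ne, hu, hw, ne_of_mem_of_not_mem hw hu |>.symm]
  · simp [hu, Subtype.ext_iff]

variable (G : SimpleGraph V)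

lemma isTDColoring_collapseColoring {s : Finset V} (hs : ∀ u ∈ s, ∀ v ∈ s, ¬ G.Adj u v)
    (hdom : ∀ v, (∃ u ∉ s, G.Adj v u) ∨ (s.Nonempty ∧ ∀ u ∈ s, G.Adj v u)) :
    IsTDColoring G (collapseColoring s) := by
  refine ⟨fun u v huv heq => ?_, fun v => ?_⟩
  · rcases collapseColoring_eq_iff.1 heq with rfl | ⟨hu, hv⟩
    · exact huv.ne rfl
    · exact hs u hu v hv huv
  · rcases hdom v with ⟨u, hu, hvu⟩ | ⟨⟨u, hu⟩, hvs⟩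
    · refine ⟨collapseColoring s u, ⟨u, rfl⟩, fun w hw => ?_⟩
      rcases collapseColoring_eq_iff.1 hw with rfl | ⟨-, hu'⟩
      · exact hvu
      · exact absurd hu' hu
    · refine ⟨collapseColoring s u, ⟨u, rfl⟩, fun w hw => ?_⟩
      rcases collapseColoring_eq_iff.1 hw with rfl | ⟨hw', -⟩
      · exact hvs w hu
      · exact hvs w hw'

lemma tdChromNum_le_card_compl_add_one {s : Finset V} (hs : ∀ u ∈ s, ∀ v ∈ s, ¬ G.Adj u v)
    (hdom : ∀ v, (∃ u ∉ s, G.Adj v u) ∨ (s.Nonempty ∧ ∀ u ∈ s, G.Adj v u)) :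
    tdChromNum G ≤ sᶜ.card + 1 :=
  Nat.sInf_le ⟨_, isTDColoring_collapseColoring G hs hdom⟩

end Collapse

lemma SimpleGraph.IsRegularOfDegree.exists_adj_notMem_or_forall_adj {V : Type*} [Fintype V]
    {G : SimpleGraph V} [DecidableRel G.Adj] {s : Finset V} (hreg : G.IsRegularOfDegree s.card)
    (v : V) : (∃ u ∉ s, G.Adj v u) ∨ ∀ u ∈ s, G.Adj v u := by
  refine or_iff_not_imp_left.2 fun h => ?_
  have hsub : G.neighborFinset v ⊆ s := fun u hu =>
    by_contra fun hus => h ⟨u, hus, (G.mem_neighborFinset v u).1 hu⟩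
  have heq : G.neighborFinset v = s :=
    eq_of_subset_of_card_le hsub (by rw [card_neighborFinset_eq_degree, hreg v])
  intro u hu
  rwa [← heq, mem_neighborFinset] at hu

theorem stmt5_general {V : Type*} [Fintype V] (G : SimpleGraph V) [DecidableRel G.Adj]
    (k : ℕ) (hreg : G.IsRegularOfDegree k) (hα : _root_.indepNum G = k) :
    tdChromNum G ≤ Fintype.card V + 1 - _root_.indepNum G := by
  classical
  obtain ⟨s, hcard, hs⟩ := exists_indepFinset_card_eq_indepNum G
  have hdom (v : V) : (∃ u ∉ s, G.Adj v u) ∨ (s.Nonempty ∧ ∀ u ∈ s, G.Adj v u) :=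
    ((hcard.trans hα ▸ hreg).exists_adj_notMem_or_forall_adj v).imp_right
      fun h => ⟨card_pos.1 (hcard ▸ indepNum_pos G v), h⟩
  have hbound := tdChromNum_le_card_compl_add_one G hs hdom
  rw [card_compl, hcard] at hbound
  have hcard_le := hcard ▸ s.card_le_univ
  omega

/-- If `G` is a connected `k`-regular graph of order `n ≥ 2` with `α(G) = k`, then
`χ_d^t(G) ≤ n + 1 − α(G)`. -/
theorem stmt5 {V : Type*} [Fintype V] (G : SimpleGraph V) [DecidableRel G.Adj]
    (hconn : G.Connected) (hn : 2 ≤ Fintype.card V)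
    (k : ℕ) (hreg : G.IsRegularOfDegree k) (hα : _root_.indepNum G = k) :
    tdChromNum G ≤ Fintype.card V + 1 - _root_.indepNum G :=
  stmt5_general G k hreg hα
end

section
/- Let G be a finite simple connected graph of order at least 2 (so without isolated vertices). Then χ_d^t(G) ≤ γ_t(G) + min_S χ(G[V(G)−S]), where the minimum is taken over all minimum total dominating sets S of G and χ denotes the chromatic number of the induced subgraph on V(G)∖S. -/
open SimpleGraph

/-!
Given any total dominating set `S`, give the vertices of `S` pairwise distinct colors and color
`V ∖ S` properly with further colors. Every vertex `v` has a neighbor `s ∈ S`, and the color class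
of `s` is the singleton `{s}`, so `v` is adjacent to every vertex of that class. Hence
`χ_d^t(G) ≤ |S| + χ(G[V ∖ S])` for every total dominating set `S`, in particular for the minimum
ones.
-/

section

variable {V : Type*} (G : SimpleGraph V)

theorem exists_isTDColoring_of_coloring (S : Finset V) (hS : ∀ v, ∃ u ∈ S, G.Adj v u) {k : ℕ}
    (C : (G.induce ((S : Set V)ᶜ)).Coloring (Fin k)) :
    ∃ f : V → Fin (S.card + k), IsTDColoring G f := by
  classical
  let f : V → Fin (S.card + k) := fun v =>
    if h : v ∈ S then Fin.castAdd k (S.equivFin ⟨v, h⟩) else Fin.natAdd S.card (C ⟨v, h⟩)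
  have f_eq_iff (u s : V) (hs : s ∈ S) : f u = f s ↔ u = s := by
    by_cases hu : u ∈ S
    · simp [f, hu, hs, Subtype.ext_iff]
    · simp only [f, hu, hs, dif_pos, dif_neg, not_false_eq_true, Fin.ext_iff, Fin.val_castAdd,
        Fin.val_natAdd]
      have := (S.equivFin ⟨s, hs⟩).is_lt
      exact iff_of_false (by omega) (by rintro rfl; exact hu hs)
  refine ⟨f, fun u v huv => ?_, fun v => ?_⟩
  · by_cases hv : v ∈ S
    · exact mt (f_eq_iff u v hv).1 huv.ne
    by_cases hu : u ∈ S
    · exact fun h => huv.ne.symm ((f_eq_iff v u hu).1 h.symm)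
    simp only [f, hu, hv, dif_neg, not_false_eq_true, ne_eq, Fin.natAdd_inj]
    exact C.valid (by simpa using huv)
  · obtain ⟨s, hs, hvs⟩ := hS v
    exact ⟨f s, ⟨s, rfl⟩, fun u hu => (f_eq_iff u s hs).1 hu ▸ hvs⟩

theorem tdChromNum_le_card_add_chromaticNumber (S : Finset V) (hS : ∀ v, ∃ u ∈ S, G.Adj v u) :
    (tdChromNum G : ℕ∞) ≤ S.card + (G.induce ((S : Set V)ᶜ)).chromaticNumber := by
  set H := G.induce ((S : Set V)ᶜ)
  by_cases hχ : H.chromaticNumber = ⊤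
  · simp [hχ]
  obtain ⟨k, hk⟩ := H.chromaticNumber_ne_top_iff_exists.1 hχ
  obtain ⟨f, hf⟩ := exists_isTDColoring_of_coloring G S hS (H.colorable_chromaticNumber hk).some
  calc (tdChromNum G : ℕ∞) ≤ (S.card + H.chromaticNumber.toNat : ℕ) :=
        Nat.cast_le.2 (Nat.sInf_le ⟨f, hf⟩)
    _ = _ := by rw [Nat.cast_add, ENat.natCast_toNat hχ]

end

theorem stmt6_general {V : Type*} (G : SimpleGraph V) :
    (tdChromNum G : ℕ∞) ≤ (totalDomNum G : ℕ∞) +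
      sInf {c : ℕ∞ | ∃ S : Finset V, S.card = totalDomNum G ∧
        (∀ v : V, ∃ u ∈ S, G.Adj v u) ∧
        c = (G.induce ((S : Set V)ᶜ)).chromaticNumber} := by
  rw [add_comm, ENat.sInf_add]
  refine le_iInf₂ ?_
  rintro _ ⟨S, hcard, hS, rfl⟩
  rw [add_comm, ← hcard]
  exact tdChromNum_le_card_add_chromaticNumber G S hS

/-- For a connected graph `G` of order at least 2,
`χ_d^t(G) ≤ γ_t(G) + min_S χ(G[V∖S])`, the minimum being over all minimum total
dominating sets `S` of `G`. -/
theorem stmt6 {V : Type*} [Fintype V] (G : SimpleGraph V)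
    (hconn : G.Connected) (hn : 2 ≤ Fintype.card V) :
    (tdChromNum G : ℕ∞) ≤ (totalDomNum G : ℕ∞) +
      sInf {c : ℕ∞ | ∃ S : Finset V, S.card = totalDomNum G ∧
        (∀ v : V, ∃ u ∈ S, G.Adj v u) ∧
        c = (G.induce ((S : Set V)ᶜ)).chromaticNumber} :=
  stmt6_general G
end

section
/- Let G be a finite simple connected graph of order at least 2 (so without isolated vertices) whose vertex set can be partitioned into p independent sets (i.e., G is p-partite). Then χ_d^t(G) ≤ γ_t(G) + p. -/
open SimpleGraph

/- Take a minimum total dominating set `S` and a proper `p`-coloring `f`. Give every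
vertex of `S` a color of its own and color the remaining vertices by `f` with `p` further colors.
This is proper, and every vertex `v` has a neighbor `u ∈ S`, whose color class is `{u}`. -/

namespace SimpleGraph

variable {V : Type*} {p : ℕ}

open Classical in
noncomputable def coloringOfTotalDomSet (S : Finset V) (f : V → Fin p) (v : V) : Fin (S.card + p) :=
  finSumFinEquiv (if h : v ∈ S then .inl (S.equivFin ⟨v, h⟩) else .inr (f v))

variable {S : Finset V} {f : V → Fin p} {u v : V}

theorem coloringOfTotalDomSet_eq_iff_of_mem (hu : u ∈ S) :
    coloringOfTotalDomSet S f v = coloringOfTotalDomSet S f u ↔ v = u := by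
  refine ⟨fun h => ?_, fun h => h ▸ rfl⟩
  unfold coloringOfTotalDomSet at h
  have h := finSumFinEquiv.injective h
  by_cases hv : v ∈ S
  · simp only [hu, hv, dite_true, Sum.inl.injEq] at h
    exact congrArg Subtype.val (S.equivFin.injective h)
  · simp [hu, hv] at h

theorem coloringOfTotalDomSet_eq_iff_of_notMem (hu : u ∉ S) (hv : v ∉ S) :
    coloringOfTotalDomSet S f u = coloringOfTotalDomSet S f v ↔ f u = f v := by
  simp [coloringOfTotalDomSet, hu, hv]

theorem isTDColoring_coloringOfTotalDomSet (G : SimpleGraph V)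
    (hS : ∀ v, ∃ u ∈ S, G.Adj v u) (hf : ∀ u v, G.Adj u v → f u ≠ f v) :
    IsTDColoring G (coloringOfTotalDomSet S f) := by
  refine ⟨fun u v huv heq => ?_, fun v => ?_⟩
  · by_cases hv : v ∈ S
    · exact G.ne_of_adj huv ((coloringOfTotalDomSet_eq_iff_of_mem hv).1 heq)
    by_cases hu : u ∈ S
    · exact G.ne_of_adj huv ((coloringOfTotalDomSet_eq_iff_of_mem hu).1 heq.symm).symm
    exact hf u v huv ((coloringOfTotalDomSet_eq_iff_of_notMem hu hv).1 heq)
  · obtain ⟨u, hu, hvu⟩ := hS v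
    exact ⟨_, ⟨u, rfl⟩, fun w hw => (coloringOfTotalDomSet_eq_iff_of_mem hu).1 hw ▸ hvu⟩

theorem tdChromNum_le_card_add (G : SimpleGraph V)
    (hS : ∀ v, ∃ u ∈ S, G.Adj v u) (hf : ∀ u v, G.Adj u v → f u ≠ f v) :
    tdChromNum G ≤ S.card + p :=
  Nat.sInf_le ⟨_, isTDColoring_coloringOfTotalDomSet G hS hf⟩

theorem exists_totalDomSet_card_eq [Fintype V] (G : SimpleGraph V) (hG : ∀ v, ∃ u, G.Adj v u) :
    ∃ S : Finset V, S.card = totalDomNum G ∧ ∀ v, ∃ u ∈ S, G.Adj v u :=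
  Nat.sInf_mem (s := {n | ∃ S : Finset V, S.card = n ∧ ∀ v, ∃ u ∈ S, G.Adj v u})
    ⟨_, Finset.univ, rfl, fun v => (hG v).imp fun u hu => ⟨Finset.mem_univ u, hu⟩⟩

end SimpleGraph

/-- If `G` is a connected `p`-partite graph of order at least 2, then
`χ_d^t(G) ≤ γ_t(G) + p`. -/
theorem stmt7 {V : Type*} [Fintype V] (G : SimpleGraph V)
    (hconn : G.Connected) (hn : 2 ≤ Fintype.card V)
    (p : ℕ) (hpartite : ∃ f : V → Fin p, ∀ u v : V, G.Adj u v → f u ≠ f v) :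
    tdChromNum G ≤ totalDomNum G + p := by
  obtain ⟨f, hf⟩ := hpartite
  have : Nontrivial V := Fintype.one_lt_card_iff_nontrivial.1 hn
  obtain ⟨S, hcard, hS⟩ :=
    G.exists_totalDomSet_card_eq hconn.preconnected.exists_adj_of_nontrivial
  exact hcard ▸ G.tdChromNum_le_card_add hS hf
end

section
/- Let G be a finite simple connected graph of order n ≥ 2 with maximum degree Δ(G) = n − 1, and let v_1, ..., v_ℓ be all the vertices of G of degree n − 1. Then χ_d^t(G) = ℓ + χ(G[V(G) − {v_1, ..., v_ℓ}]), where χ denotes the chromatic number of the induced subgraph on the remaining vertices. -/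
open SimpleGraph

/-!
A universal vertex `v` turns every proper coloring into a total dominator coloring: the class
of `v` is `{v}`, which every other vertex dominates, and `v` itself dominates any class of a
vertex `u ≠ v`. Hence `χ_d^t(G) = χ(G)`. Moreover the universal vertices form a clique whose
colors no other vertex may use, so `χ(G)` splits as their number plus the chromatic number
of the graph induced on the remaining vertices.
-/

open Finset

namespace SimpleGraph

variable {V : Type*} [Fintype V] {G : SimpleGraph V} {P : V → Prop} [DecidablePred P]

theorem colorable_card_add_of_colorable_induce {c : ℕ}
    (hc : (G.induce {v | ¬ P v}).Colorable c) : G.Colorable (#(univ.filter P) + c) := by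
  obtain ⟨C⟩ := hc
  let f : V → {v // P v} ⊕ Fin c := fun v =>
    if h : P v then .inl ⟨v, h⟩ else .inr (C ⟨v, h⟩)
  have hf : ∀ ⦃u w⦄, G.Adj u w → f u ≠ f w := by
    intro u w huw
    by_cases hu : P u <;> by_cases hw : P w <;> simp only [f, hu, hw, dite_true, dite_false]
    · simpa using huw.ne
    · simp
    · simp
    · simpa using C.valid (show (G.induce {v | ¬ P v}).Adj ⟨u, hu⟩ ⟨w, hw⟩ from huw)
  simpa [Fintype.card_subtype] using (Coloring.mk f fun h => hf h).colorable

theorem Colorable.colorable_induce_sub_card (hP : ∀ v, P v → G.IsUniversal v) {k : ℕ}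
    (hk : G.Colorable k) : (G.induce {v | ¬ P v}).Colorable (k - #(univ.filter P)) := by
  obtain ⟨C⟩ := hk
  set T := (univ.filter P).image C
  have hT : #T = #(univ.filter P) := card_image_of_injOn fun u hu w _ huw => by
    by_contra hne
    exact C.valid (hP u (mem_filter.mp hu).2 hne) huw
  have havoid (w : {v | ¬ P v}) : C w ∉ T := by
    simp only [T, mem_image, mem_filter, mem_univ, true_and, not_exists, not_and]
    intro u hu huw
    have hne : u ≠ w := fun h => w.2 (h ▸ hu)
    exact C.valid (hP u hu hne) huw
  let C' : (G.induce {v | ¬ P v}).Coloring {i // i ∉ T} :=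
    Coloring.mk (fun w => ⟨C w, havoid w⟩) fun huw h => C.valid huw (congrArg Subtype.val h)
  simpa [Fintype.card_subtype_compl, hT] using C'.colorable

theorem exists_colorable_chromaticNumber_eq {W : Type*} [Fintype W] (H : SimpleGraph W) :
    ∃ k : ℕ, H.Colorable k ∧ H.chromaticNumber = k :=
  ⟨_, H.colorable_chromaticNumber_of_fintype,
    (ENat.natCast_toNat (chromaticNumber_ne_top_iff_exists.mpr ⟨_, H.colorable_of_fintype⟩)).symm⟩

theorem chromaticNumber_eq_card_add_chromaticNumber_induce (hP : ∀ v, P v → G.IsUniversal v) :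
    G.chromaticNumber = #(univ.filter P) + (G.induce {v | ¬ P v}).chromaticNumber := by
  obtain ⟨k, hG, hGk⟩ := G.exists_colorable_chromaticNumber_eq
  obtain ⟨c, hH, hHc⟩ := (G.induce {v | ¬ P v}).exists_colorable_chromaticNumber_eq
  have hclique : #(univ.filter P) ≤ k :=
    IsClique.card_le_of_colorable (fun u hu w _ huw => hP u (by simpa using hu) huw) hG
  have hsub : c ≤ k - #(univ.filter P) := by
    exact_mod_cast hHc ▸ (hG.colorable_induce_sub_card hP).chromaticNumber_le
  have hadd : k ≤ #(univ.filter P) + c := by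
    exact_mod_cast hGk ▸ (colorable_card_add_of_colorable_induce hH).chromaticNumber_le
  rw [hGk, hHc]
  exact_mod_cast (by omega : k = #(univ.filter P) + c)

end SimpleGraph

theorem isTDColoring_of_isUniversal {V : Type*} [Nontrivial V] {G : SimpleGraph V} {v : V}
    (hv : G.IsUniversal v) {n : ℕ} {f : V → Fin n} (hf : ∀ u w, G.Adj u w → f u ≠ f w) :
    IsTDColoring G f := by
  have hclass : ∀ u, f u = f v → u = v := fun u hu => by
    by_contra hne
    exact hf v u (hv (Ne.symm hne)) hu.symm
  refine ⟨hf, fun w => ?_⟩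
  by_cases hw : w = v
  · obtain ⟨u, hu⟩ := exists_ne v
    refine ⟨f u, ⟨u, rfl⟩, fun x hx => hw ▸ hv ?_⟩
    rintro rfl
    exact hu (hclass u hx.symm)
  · exact ⟨f v, ⟨v, rfl⟩, fun u hu => hclass u hu ▸ (hv (Ne.symm hw)).symm⟩

theorem tdChromNum_eq_chromaticNumber {V : Type*} [Fintype V] [Nontrivial V]
    {G : SimpleGraph V} {v : V} (hv : G.IsUniversal v) :
    (tdChromNum G : ℕ∞) = G.chromaticNumber := by
  have hset : {n : ℕ | ∃ f : V → Fin n, IsTDColoring G f} = {n | G.Colorable n} := by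
    ext n
    exact ⟨fun ⟨f, hf, _⟩ => ⟨Coloring.mk f fun h => hf _ _ h⟩,
      fun ⟨C⟩ => ⟨C, isTDColoring_of_isUniversal hv fun _ _ h => C.valid h⟩⟩
  rw [tdChromNum, hset, G.colorable_of_fintype.chromaticNumber_eq_sInf]

theorem stmt10_general {V : Type*} [Fintype V] (G : SimpleGraph V) [DecidableRel G.Adj]
    (hn : 2 ≤ Fintype.card V)
    (hΔ : G.maxDegree = Fintype.card V - 1) :
    (tdChromNum G : ℕ∞) =
      (Finset.univ.filter fun v : V => G.degree v = Fintype.card V - 1).card +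
        (G.induce {v : V | ¬ G.degree v = Fintype.card V - 1}).chromaticNumber := by
  have : Nontrivial V := Fintype.one_lt_card_iff_nontrivial.mp hn
  obtain ⟨v, hv⟩ := G.exists_maximal_degree_vertex
  rw [tdChromNum_eq_chromaticNumber ((G.degree_eq_card_sub_one v).mp (hv ▸ hΔ))]
  exact chromaticNumber_eq_card_add_chromaticNumber_induce fun u =>
    (G.degree_eq_card_sub_one u).mp

/-- If `G` is a connected graph of order `n ≥ 2` with `Δ(G) = n − 1` and `v_1, …, v_ℓ` are
all the vertices of degree `n − 1`, then `χ_d^t(G) = ℓ + χ(G[V − {v_1, …, v_ℓ}])`. -/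
theorem stmt10 {V : Type*} [Fintype V] (G : SimpleGraph V) [DecidableRel G.Adj]
    (hconn : G.Connected) (hn : 2 ≤ Fintype.card V)
    (hΔ : G.maxDegree = Fintype.card V - 1) :
    (tdChromNum G : ℕ∞) =
      (Finset.univ.filter fun v : V => G.degree v = Fintype.card V - 1).card +
        (G.induce {v : V | ¬ G.degree v = Fintype.card V - 1}).chromaticNumber :=
  stmt10_general G hn hΔ
end

section
/- Let W_n (n ≥ 3) be the wheel of order n + 1. Then χ_d^t(W_n) = 3 if n is even, and χ_d^t(W_n) = 4 if n is odd. -/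
open SimpleGraph

/-- The wheel `W_n`: the cycle `C_n` together with a hub (`none`) adjacent to all
vertices of the cycle. -/
def wheelGraph (n : ℕ) : SimpleGraph (Option (Fin n)) :=
  SimpleGraph.fromRel (fun u v =>
    u = none ∨ ∃ i j : Fin n, u = some i ∧ v = some j ∧ (SimpleGraph.cycleGraph n).Adj i j)

/-! The wheel is the cone over `C_n`, so its proper colorings are those of `C_n` plus a private
color for the hub; conversely, in such a coloring every rim vertex dominates the hub's class and
the hub dominates every other class. Hence `χ_d^t(W_n) = χ(C_n) + 1`, and `χ(C_n)` is `2` or `3`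
according to the parity of `n`. -/

namespace IsTDColoring

variable {V : Type*} {G : SimpleGraph V}

theorem colorable {k : ℕ} {f : V → Fin k} (hf : IsTDColoring G f) : G.Colorable k :=
  ⟨Coloring.mk f fun huv => hf.1 _ _ huv⟩

theorem tdChromNum_eq {k : ℕ} {f : V → Fin (k + 1)} (hf : IsTDColoring G f)
    (hk : ¬G.Colorable k) : tdChromNum G = k + 1 := by
  refine le_antisymm (Nat.sInf_le ⟨f, hf⟩) (le_csInf ⟨k + 1, f, hf⟩ ?_)
  rintro m ⟨g, hg⟩
  by_contra! hm
  exact hk (hg.colorable.mono (by omega))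

end IsTDColoring

section Wheel

variable {n k : ℕ}

@[simp]
theorem wheelGraph_adj_none_some (i : Fin n) : (wheelGraph n).Adj none (some i) := by
  simp [wheelGraph]

@[simp]
theorem wheelGraph_adj_some_some {i j : Fin n} :
    (wheelGraph n).Adj (some i) (some j) ↔ (cycleGraph n).Adj i j := by
  simpa [wheelGraph, (cycleGraph n).adj_comm j i] using Adj.ne

theorem colorable_cycleGraph_of_colorable_wheelGraph (h : (wheelGraph n).Colorable (k + 1)) :
    (cycleGraph n).Colorable k := by
  obtain ⟨C⟩ := h
  let D : (cycleGraph n).Coloring {c // c ≠ C none} :=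
    Coloring.mk (fun i => ⟨C (some i), (C.valid (wheelGraph_adj_none_some i)).symm⟩)
      fun hij hC => C.valid (wheelGraph_adj_some_some.2 hij) (congrArg Subtype.val hC)
  simpa [Fintype.card_subtype_compl] using D.colorable

def wheelColoring (C : (cycleGraph n).Coloring (Fin k)) : Option (Fin n) → Fin (k + 1) :=
  fun v => v.elim 0 fun i => (C i).succ

theorem isTDColoring_wheelColoring [Nonempty (Fin n)] (C : (cycleGraph n).Coloring (Fin k)) :
    IsTDColoring (wheelGraph n) (wheelColoring C) := by
  refine ⟨?_, ?_⟩
  · rintro (_ | i) (_ | j) hij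
    · exact absurd rfl hij.ne
    · exact (Fin.succ_ne_zero _).symm
    · exact Fin.succ_ne_zero _
    · exact fun h => C.valid (wheelGraph_adj_some_some.1 hij) (Fin.succ_injective _ h)
  · rintro (_ | i)
    · obtain ⟨i⟩ := ‹Nonempty (Fin n)›
      refine ⟨(C i).succ, ⟨some i, rfl⟩, ?_⟩
      rintro (_ | j) hj
      · exact absurd hj (Fin.succ_ne_zero _).symm
      · exact wheelGraph_adj_none_some j
    · refine ⟨0, ⟨none, rfl⟩, ?_⟩
      rintro (_ | j) hj
      · exact (wheelGraph_adj_none_some i).symm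
      · exact absurd hj (Fin.succ_ne_zero _)

theorem tdChromNum_wheelGraph (h : (cycleGraph n).chromaticNumber = k + 1) :
    tdChromNum (wheelGraph n) = k + 2 := by
  have : Nonempty (Fin n) := not_isEmpty_iff.mp fun hE => by
    rw [chromaticNumber_eq_zero_iff.mpr hE] at h
    norm_cast at h
  obtain ⟨C⟩ := chromaticNumber_le_iff_colorable.mp h.le
  refine (isTDColoring_wheelColoring C).tdChromNum_eq fun hW => ?_
  have := (colorable_cycleGraph_of_colorable_wheelGraph hW).chromaticNumber_le
  rw [h] at this
  norm_cast at this
  omega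

end Wheel

/-- For the wheel `W_n` (`n ≥ 3`): `χ_d^t(W_n) = 3` if `n` is even and `= 4` if `n` is odd. -/
theorem stmt11 (n : ℕ) (hn : 3 ≤ n) :
    (Even n → tdChromNum (wheelGraph n) = 3) ∧
    (Odd n → tdChromNum (wheelGraph n) = 4) := by
  refine ⟨fun he => ?_, fun ho => ?_⟩
  · exact tdChromNum_wheelGraph (k := 1) <| by
      rw [chromaticNumber_cycleGraph_of_even n (by omega) he]; norm_num
  · exact tdChromNum_wheelGraph (k := 2) <| by
      rw [chromaticNumber_cycleGraph_of_odd n (by omega) ho]; norm_num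
end

section
/- Let C̄_n be the complement of the cycle C_n of order n ≥ 4. Then χ_d^t(C̄_n) = 4 if n ∈ {4, 5}, and χ_d^t(C̄_n) = ⌈n/2⌉ if n ≥ 6. -/
open SimpleGraph

/-! A proper colouring of `C̄_n` has colour classes that are cliques of `C_n`; for `n ≥ 4` the cycle
is triangle-free, so each class has at most two vertices and at least `⌈n/2⌉` colours are needed.
For `n ≥ 6` giving each pair `{2k, 2k+1}` its own colour attains this bound: every vertex is
adjacent in `C̄_n` to both vertices of one of the pairs `{0, 1}`, `{2, 3}`, `{4, 5}`. For `n = 4, 5`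
a finite check shows that three colours never suffice, while four do. -/

section TDColoring

variable {V : Type*} {G : SimpleGraph V}

lemma IsTDColoring.castLE {m k : ℕ} (h : m ≤ k) {f : V → Fin m} (hf : IsTDColoring G f) :
    IsTDColoring G (Fin.castLE h ∘ f) := by
  obtain ⟨hproper, hdom⟩ := hf
  refine ⟨fun u v huv hf => hproper u v huv (Fin.castLE_injective h hf), fun v => ?_⟩
  obtain ⟨i, ⟨u, hu⟩, hall⟩ := hdom v
  exact ⟨Fin.castLE h i, ⟨u, congrArg (Fin.castLE h) hu⟩,
    fun w hw => hall w (Fin.castLE_injective h hw)⟩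

lemma tdChromNum_eq_of_forall_le {k : ℕ} (hk : ∃ f : V → Fin k, IsTDColoring G f)
    (hmin : ∀ m (f : V → Fin m), IsTDColoring G f → k ≤ m) : tdChromNum G = k :=
  le_antisymm (Nat.sInf_le hk) (le_csInf ⟨k, hk⟩ fun m ⟨f, hf⟩ => hmin m f hf)

lemma tdChromNum_eq_succ {k : ℕ} (hk : ∃ f : V → Fin (k + 1), IsTDColoring G f)
    (hno : ¬∃ f : V → Fin k, IsTDColoring G f) : tdChromNum G = k + 1 :=
  tdChromNum_eq_of_forall_le hk fun m f hf => by
    by_contra! hm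
    exact hno ⟨_, hf.castLE (Nat.le_of_lt_succ hm)⟩

end TDColoring

theorem SimpleGraph.IsClique.card_lt_of_cliqueFree {α : Type*} {G : SimpleGraph α} {k : ℕ}
    {s : Finset α} (hs : G.IsClique s) (hG : G.CliqueFree k) : s.card < k := by
  by_contra! hks
  obtain ⟨t, hts, htk⟩ := Finset.exists_subset_card_eq hks
  exact hG t ⟨hs.subset (by exact_mod_cast hts), htk⟩

theorem card_le_mul_of_cliqueFree_of_compl_coloring {V : Type*} [Fintype V] {G : SimpleGraph V}
    {k m : ℕ} (hG : G.CliqueFree (k + 1)) (f : V → Fin m)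
    (hf : ∀ u v, Gᶜ.Adj u v → f u ≠ f v) : Fintype.card V ≤ k * m := by
  classical
  have hclass : ∀ i, G.IsClique ({v | f v = i} : Finset V) := by
    intro i u hu v hv huv
    simp only [Finset.coe_filter, Finset.mem_univ, true_and, Set.mem_ofPred_eq] at hu hv
    by_contra hadj
    exact hf u v ⟨huv, hadj⟩ (hu.trans hv.symm)
  simpa using Finset.card_le_mul_card_image_of_maps_to (s := Finset.univ) (t := Finset.univ)
    (fun v _ => Finset.mem_univ (f v)) k
    fun i _ => Nat.le_of_lt_succ ((hclass i).card_lt_of_cliqueFree hG)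

section CycleGraph

variable {n : ℕ}

theorem Fin.val_sub_eq_one_iff (hn : 2 ≤ n) (u v : Fin n) :
    (u - v).val = 1 ↔ v.val + 1 = u.val ∨ v.val + 1 = n ∧ u.val = 0 := by
  have hu := u.isLt
  rw [Fin.sub_def]
  dsimp only
  rcases Nat.lt_or_ge (n - v.val + u.val) n with h | h
  · rw [Nat.mod_eq_of_lt h]; omega
  · rw [Nat.mod_eq_sub_mod h, Nat.mod_eq_of_lt (by omega)]; omega

theorem cycleGraph_adj_iff_val (hn : 2 ≤ n) {u v : Fin n} :
    (cycleGraph n).Adj u v ↔ u.val + 1 = v.val ∨ v.val + 1 = u.val ∨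
      u.val = 0 ∧ v.val + 1 = n ∨ v.val = 0 ∧ u.val + 1 = n := by
  rw [cycleGraph_adj', Fin.val_sub_eq_one_iff hn, Fin.val_sub_eq_one_iff hn]
  tauto

theorem compl_cycleGraph_adj_iff_val (hn : 2 ≤ n) {u v : Fin n} :
    (cycleGraph n)ᶜ.Adj u v ↔ u.val ≠ v.val ∧ ¬(u.val + 1 = v.val ∨ v.val + 1 = u.val ∨
      u.val = 0 ∧ v.val + 1 = n ∨ v.val = 0 ∧ u.val + 1 = n) := by
  rw [compl_adj, cycleGraph_adj_iff_val hn, Ne, Fin.ext_iff]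

theorem cycleGraph_cliqueFree_three (hn : 4 ≤ n) : (cycleGraph n).CliqueFree 3 := by
  intro s hs
  obtain ⟨a, b, c, hab, hac, hbc, rfl⟩ := Finset.card_eq_three.mp hs.card_eq
  have hadj := hs.isClique
  simp only [Finset.coe_insert, Finset.coe_singleton, isClique_insert, isClique_singleton,
    Set.mem_singleton_iff, Set.mem_insert_iff] at hadj
  have h1 := cycleGraph_adj_iff_val (by omega) |>.mp (hadj.2 b (Or.inl rfl) hab)
  have h2 := cycleGraph_adj_iff_val (by omega) |>.mp (hadj.2 c (Or.inr rfl) hac)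
  have h3 := cycleGraph_adj_iff_val (by omega) |>.mp (hadj.1.2 c rfl hbc)
  rw [Ne, ← Fin.val_inj] at hab hac hbc
  omega

end CycleGraph

theorem isTDColoring_compl_cycleGraph_div_two {n : ℕ} (hn : 6 ≤ n) :
    IsTDColoring (cycleGraph n)ᶜ fun v : Fin n => (⟨v / 2, by omega⟩ : Fin ((n + 1) / 2)) := by
  refine ⟨fun u v hadj hcol => ?_, fun v => ?_⟩
  · rw [compl_cycleGraph_adj_iff_val (by omega)] at hadj
    simp only [Fin.mk.injEq] at hcol
    omega
  · have hv := v.isLt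
    -- the pair `{2k, 2k+1}` avoids `v - 1, v, v + 1`
    let k := if v.val = 1 ∨ v.val = 2 then 2 else if v.val = 0 ∨ v.val + 1 = n then 1 else 0
    have hk : 2 * k + 1 < n := by dsimp only [k]; split_ifs <;> omega
    refine ⟨⟨k, by omega⟩, ⟨⟨2 * k, by omega⟩, Fin.ext (by simp)⟩, fun u hu => ?_⟩
    simp only [Fin.mk.injEq] at hu
    rw [compl_cycleGraph_adj_iff_val (by omega)]
    dsimp only [k] at hu
    split_ifs at hu <;> omega

theorem isTDColoring_compl_cycleGraph_four :
    IsTDColoring (cycleGraph 4)ᶜ (id : Fin 4 → Fin 4) := by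
  unfold IsTDColoring; decide

theorem isTDColoring_compl_cycleGraph_five :
    IsTDColoring (cycleGraph 5)ᶜ (![0, 0, 1, 2, 3] : Fin 5 → Fin 4) := by
  unfold IsTDColoring; decide

theorem not_isTDColoring_compl_cycleGraph_four_three :
    ¬∃ f : Fin 4 → Fin 3, IsTDColoring (cycleGraph 4)ᶜ f := by
  unfold IsTDColoring; decide

set_option maxRecDepth 2000 in
theorem not_isTDColoring_compl_cycleGraph_five_three :
    ¬∃ f : Fin 5 → Fin 3, IsTDColoring (cycleGraph 5)ᶜ f := by
  unfold IsTDColoring; decide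

theorem stmt14_general (n : ℕ) :
    (n = 4 ∨ n = 5 → tdChromNum ((SimpleGraph.cycleGraph n)ᶜ) = 4) ∧
    (6 ≤ n → tdChromNum ((SimpleGraph.cycleGraph n)ᶜ) = (n + 1) / 2) := by
  refine ⟨?_, fun hn => ?_⟩
  · rintro (rfl | rfl)
    · exact tdChromNum_eq_succ ⟨_, isTDColoring_compl_cycleGraph_four⟩
        not_isTDColoring_compl_cycleGraph_four_three
    · exact tdChromNum_eq_succ ⟨_, isTDColoring_compl_cycleGraph_five⟩
        not_isTDColoring_compl_cycleGraph_five_three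
  · refine tdChromNum_eq_of_forall_le ⟨_, isTDColoring_compl_cycleGraph_div_two hn⟩
      fun m f hf => ?_
    have hcard := card_le_mul_of_cliqueFree_of_compl_coloring
      (cycleGraph_cliqueFree_three (by omega)) f hf.1
    rw [Fintype.card_fin] at hcard
    omega

/-- Total dominator chromatic number of complements of cycles: for `n ≥ 4`,
`χ_d^t(C̄_n) = 4` if `n ∈ {4, 5}` and `χ_d^t(C̄_n) = ⌈n/2⌉` if `n ≥ 6`.
(Here `⌈n/2⌉ = (n + 1)/2` in natural-number arithmetic.) -/
theorem stmt14 (n : ℕ) (hn : 4 ≤ n) :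
    (n = 4 ∨ n = 5 → tdChromNum ((SimpleGraph.cycleGraph n)ᶜ) = 4) ∧
    (6 ≤ n → tdChromNum ((SimpleGraph.cycleGraph n)ᶜ) = (n + 1) / 2) :=
  stmt14_general n
end

section
/- Let P̄_n be the complement of the path P_n of order n ≥ 4. Then χ_d^t(P̄_n) = 3 if n = 4, and χ_d^t(P̄_n) = ⌈n/2⌉ if n ≥ 5. -/
/-!
A proper coloring of `P̄ₙ` has color classes that are cliques of the bipartite graph `Pₙ`, hence
of size at most two, so at least `⌈n/2⌉` colors are needed. For `n ≥ 5` the classes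
`{2j, 2j+1}` achieve this bound: every vertex `v` is joined in `P̄ₙ` to all of `{0, 1}` when
`v ≥ 3` and to all of `{4, 5}` when `v ≤ 2`. For `n = 4` two colors would force the classes
`{0, 1}` and `{2, 3}`, but vertex `1` is adjacent in `P̄₄` only to `3`.
-/

open SimpleGraph

theorem tdChromNum_eq_of_isTDColoring {V : Type*} {G : SimpleGraph V} {k : ℕ} {f : V → Fin k}
    (hf : IsTDColoring G f) (hmin : ∀ m (g : V → Fin m), IsTDColoring G g → k ≤ m) :
    tdChromNum G = k :=
  le_antisymm (Nat.sInf_le ⟨f, hf⟩) <|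
    le_csInf ⟨k, f, hf⟩ fun _ ⟨g, hg⟩ ↦ hmin _ g hg

theorem card_le_mul_of_colorable_of_compl {V α : Type*} [Fintype V] [Fintype α]
    {G : SimpleGraph V} {k : ℕ} (hG : G.Colorable k) (f : V → α)
    (hf : ∀ u v, Gᶜ.Adj u v → f u ≠ f v) :
    Fintype.card V ≤ k * Fintype.card α := by
  classical
  have hclass : ∀ a, (Finset.univ.filter fun v ↦ f v = a).card ≤ k := by
    refine fun a ↦ IsClique.card_le_of_colorable (fun u hu v hv huv ↦ ?_) hG
    by_contra hnadj
    simp only [Finset.coe_filter, Finset.mem_univ, true_and, Set.mem_ofPred_eq] at hu hv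
    exact hf u v ((compl_adj G u v).mpr ⟨huv, hnadj⟩) (hu.trans hv.symm)
  calc Fintype.card V ≤ k * (Finset.univ.image f).card :=
        Finset.card_le_mul_card_image _ k fun a _ ↦ hclass a
    _ ≤ k * Fintype.card α := Nat.mul_le_mul_left k (Finset.card_le_univ _)

theorem le_two_mul_of_isTDColoring_compl_pathGraph {n m : ℕ} {f : Fin n → Fin m}
    (hf : IsTDColoring (pathGraph n)ᶜ f) : n ≤ 2 * m := by
  simpa using card_le_mul_of_colorable_of_compl (pathGraph.bicoloring n).colorable f hf.1

theorem isTDColoring_compl_pathGraph_div_two {n : ℕ} (hn : 5 ≤ n) :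
    IsTDColoring (pathGraph n)ᶜ fun v : Fin n ↦ (⟨v / 2, by omega⟩ : Fin ((n + 1) / 2)) := by
  refine ⟨fun u v huv heq ↦ ?_, fun v ↦ ?_⟩
  · rw [compl_adj, pathGraph_adj, Ne, Fin.ext_iff] at huv
    have : u.val / 2 = v.val / 2 := Fin.ext_iff.mp heq
    omega
  · obtain ⟨j, hj⟩ : ∃ j, v.val ≤ 2 ∧ j = 2 ∨ 2 < v.val ∧ j = 0 :=
      ⟨if v.val ≤ 2 then 2 else 0, by split_ifs <;> omega⟩
    refine ⟨⟨j, by omega⟩, ⟨⟨2 * j, by omega⟩, Fin.ext (by simp)⟩, fun u hu ↦ ?_⟩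
    have hu : u.val / 2 = j := Fin.ext_iff.mp hu
    rw [compl_adj, pathGraph_adj, Ne, Fin.ext_iff]
    omega

theorem not_isTDColoring_compl_pathGraph_four_two (f : Fin 4 → Fin 2) :
    ¬ IsTDColoring (pathGraph 4)ᶜ f := by
  revert f
  simp only [IsTDColoring, compl_adj, pathGraph_adj, ne_eq, not_or]
  decide

theorem isTDColoring_compl_pathGraph_four :
    IsTDColoring (pathGraph 4)ᶜ (![0, 1, 1, 2] : Fin 4 → Fin 3) := by
  simp only [IsTDColoring, compl_adj, pathGraph_adj, ne_eq, not_or]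
  decide

theorem stmt15_general (n : ℕ) :
    (n = 4 → tdChromNum ((SimpleGraph.pathGraph n)ᶜ) = 3) ∧
    (5 ≤ n → tdChromNum ((SimpleGraph.pathGraph n)ᶜ) = (n + 1) / 2) := by
  refine ⟨?_, fun h5 ↦ ?_⟩
  · rintro rfl
    refine tdChromNum_eq_of_isTDColoring isTDColoring_compl_pathGraph_four fun m g hg ↦ ?_
    have := le_two_mul_of_isTDColoring_compl_pathGraph hg
    by_contra! hm
    obtain rfl : m = 2 := by omega
    exact not_isTDColoring_compl_pathGraph_four_two g hg
  · refine tdChromNum_eq_of_isTDColoring (isTDColoring_compl_pathGraph_div_two h5)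
      fun m g hg ↦ ?_
    have := le_two_mul_of_isTDColoring_compl_pathGraph hg
    omega

/-- Total dominator chromatic number of complements of paths: for `n ≥ 4`,
`χ_d^t(P̄_n) = 3` if `n = 4` and `χ_d^t(P̄_n) = ⌈n/2⌉` if `n ≥ 5`.
(Here `⌈n/2⌉ = (n + 1)/2` in natural-number arithmetic.) -/
theorem stmt15 (n : ℕ) (hn : 4 ≤ n) :
    (n = 4 → tdChromNum ((SimpleGraph.pathGraph n)ᶜ) = 3) ∧
    (5 ≤ n → tdChromNum ((SimpleGraph.pathGraph n)ᶜ) = (n + 1) / 2) :=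
  stmt15_general n
end

section
/- Let T be a tree of order n ≥ 3 and let s be the number of support vertices of T. Then χ_d^t(T) ≥ s + 1. -/
open SimpleGraph

namespace IsTDColoring

variable {V : Type*} {G : SimpleGraph V} {n : ℕ} {f : V → Fin n}

/-- A leaf must be adjacent to a whole color class, so the class of its support vertex is a
singleton. -/
lemma eq_of_color_eq_of_adj_leaf (hf : IsTDColoring G f) {u v : V} [Fintype (G.neighborSet u)]
    (hu : G.degree u = 1) (huv : G.Adj u v) {x : V} (hx : f x = f v) : x = v := by
  obtain ⟨v', -, hv'⟩ := degree_eq_one_iff_existsUnique_adj.mp hu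
  obtain ⟨i, ⟨w, rfl⟩, hi⟩ := hf.2 u
  obtain rfl : w = v := (hv' w (hi w rfl)).trans (hv' v huv).symm
  exact (hv' x (hi x hx)).trans (hv' _ huv).symm

/-- The support vertices form pairwise distinct singleton classes, and one more color is used
by a vertex outside them (a leaf, or any vertex if there are no support vertices). -/
lemma ncard_supportVertices_add_one_le [Fintype V] [DecidableRel G.Adj] [Nonempty V]
    (hf : IsTDColoring G f) :
    {v : V | 1 < G.degree v ∧ ∃ u : V, G.Adj v u ∧ G.degree u = 1}.ncard + 1 ≤ n := by
  set S : Set V := {v | 1 < G.degree v ∧ ∃ u : V, G.Adj v u ∧ G.degree u = 1}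
  have hclass : ∀ v ∈ S, ∀ x, f x = f v → x = v := fun v ⟨_, _, hvu, hu⟩ _ hx ↦
    hf.eq_of_color_eq_of_adj_leaf hu hvu.symm hx
  obtain ⟨w, hw⟩ : ∃ w, w ∉ S := by
    rcases S.eq_empty_or_nonempty with hS | ⟨_, -, u, -, hu⟩
    · exact ⟨Classical.arbitrary V, hS ▸ Set.notMem_empty _⟩
    · exact ⟨u, fun h ↦ by have := h.1; omega⟩
  have hfw : f w ∉ f '' S := by
    rintro ⟨v, hv, hfv⟩
    exact hw (hclass v hv w hfv.symm ▸ hv)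
  calc S.ncard + 1 = (f '' S).ncard + 1 := by
        rw [Set.InjOn.ncard_image fun a _ b hb hab ↦ hclass b hb a hab]
    _ = (insert (f w) (f '' S)).ncard := (Set.ncard_insert_of_notMem hfw).symm
    _ ≤ Nat.card (Fin n) := Set.ncard_le_card _
    _ = n := Nat.card_fin n

end IsTDColoring

lemma exists_isTDColoring_of_forall_exists_adj {V : Type*} [Fintype V] {G : SimpleGraph V}
    (h : ∀ v, ∃ u, G.Adj v u) : ∃ f : V → Fin (Fintype.card V), IsTDColoring G f := by
  let e := Fintype.equivFin V
  refine ⟨e, fun u v huv hf ↦ huv.ne (e.injective hf), fun v ↦ ?_⟩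
  obtain ⟨u, hvu⟩ := h v
  exact ⟨e u, ⟨u, rfl⟩, fun w hw ↦ e.injective hw ▸ hvu⟩

/-- For any tree `T` of order `n ≥ 3` with `s` support vertices, `χ_d^t(T) ≥ s + 1`.
A support vertex is a vertex of degree more than one adjacent to a leaf (vertex of
degree one). -/
theorem stmt16 {V : Type*} [Fintype V] (T : SimpleGraph V) [DecidableRel T.Adj]
    (htree : T.IsTree) (hn : 3 ≤ Fintype.card V) :
    {v : V | 1 < T.degree v ∧ ∃ u : V, T.Adj v u ∧ T.degree u = 1}.ncard + 1 ≤
      tdChromNum T := by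
  have : Nontrivial V := Fintype.one_lt_card_iff_nontrivial.mp (by omega)
  have hadj := htree.connected.preconnected.exists_adj_of_nontrivial
  refine le_csInf ⟨_, exists_isTDColoring_of_forall_exists_adj hadj⟩ ?_
  rintro n ⟨f, hf⟩
  exact hf.ncard_supportVertices_add_one_le
end
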